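/- Let (Ω, μ) be a probability space, H a separable real Hilbert space, K ⊆ H a nonempty closed convex set, and 𝒦 = {x ∈ L²(μ, H) : x(ω) ∈ K a.e.}. Let x* ∈ 𝒦 and F ∈ L²(μ, H). If ∫ ⟨F(ω), z(ω) − x*(ω)⟩ dμ(ω) ≥ 0 for every z ∈ 𝒦, then for μ-a.e. ω it holds that ⟨F(ω), a − x*(ω)⟩ ≥ 0 for all a ∈ K. -/

import Mathlib

open MeasureTheory InnerProductSpace TopologicalSpace

/-!
Testing the integrated inequality against `z = a` on a measurable set `A` and `z = x*` off `A`
gives `∫_A ⟪F, a - x*⟫ ≥ 0` for every measurable `A`, hence `⟪F, a - x*⟫ ≥ 0` a.e. for each fixed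
`a ∈ K`. Separability lets one take these null sets over a countable dense subset of `K` only,
and the inequality passes to the closure since it is closed in `a`.
-/

theorem ae_forall_mem_of_isSeparable {Ω X : Type*} [MeasurableSpace Ω] {μ : Measure Ω}
    [TopologicalSpace X] [PseudoMetrizableSpace X] {K : Set X} (hK : IsSeparable K)
    {p : Ω → X → Prop} (hp_closed : ∀ ω, IsClosed {a | p ω a})
    (hp : ∀ a ∈ K, ∀ᵐ ω ∂μ, p ω a) :
    ∀ᵐ ω ∂μ, ∀ a ∈ K, p ω a := by
  obtain ⟨t, htK, htc, hKt⟩ := hK.exists_countable_dense_subset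
  filter_upwards [(ae_ball_iff htc).2 fun a ha => hp a (htK ha)] with ω hω a ha
  exact closure_minimal hω (hp_closed ω) (hKt ha)

section VariationalInequality

variable {Ω H : Type*} [MeasurableSpace Ω] {μ : Measure Ω} [IsFiniteMeasure μ]
  [NormedAddCommGroup H] [InnerProductSpace ℝ H]

theorem integrable_inner_const_sub (F x : Lp H 2 μ) (a : H) :
    Integrable (fun ω => ⟪F ω, a - x ω⟫_ℝ) μ := by
  have h : MemLp (fun ω => a - x ω) 2 μ := (memLp_const a).sub (Lp.memLp x)
  refine (L2.integrable_inner (𝕜 := ℝ) F (h.toLp _)).congr ?_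
  filter_upwards [h.coeFn_toLp] with ω hω
  rw [hω]

variable {K : Set H} {xStar F : Lp H 2 μ}

theorem setIntegral_inner_sub_nonneg_of_integral_inner_sub_nonneg
    (hxK : ∀ᵐ ω ∂μ, xStar ω ∈ K)
    (hVI : ∀ z : Lp H 2 μ, (∀ᵐ ω ∂μ, z ω ∈ K) → 0 ≤ ∫ ω, ⟪F ω, z ω - xStar ω⟫_ℝ ∂μ)
    {a : H} (ha : a ∈ K) {A : Set Ω} (hA : MeasurableSet A) :
    0 ≤ ∫ ω in A, ⟪F ω, a - xStar ω⟫_ℝ ∂μ := by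
  classical
  set g : Ω → H := A.piecewise (fun _ => a) xStar
  have hg : MemLp g 2 μ := MemLp.piecewise hA (memLp_const a) ((Lp.memLp xStar).restrict _)
  have hz := hg.coeFn_toLp
  have hzK : ∀ᵐ ω ∂μ, hg.toLp g ω ∈ K := by
    filter_upwards [hz, hxK] with ω hω hωK
    rw [hω]
    by_cases h : ω ∈ A <;> simp [g, h, ha, hωK]
  have hintegrand : (fun ω => ⟪F ω, hg.toLp g ω - xStar ω⟫_ℝ)
      =ᵐ[μ] A.indicator fun ω => ⟪F ω, a - xStar ω⟫_ℝ := by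
    filter_upwards [hz] with ω hω
    rw [hω]
    by_cases h : ω ∈ A <;> simp [g, h]
  simpa [integral_congr_ae hintegrand, integral_indicator hA] using hVI _ hzK

theorem ae_inner_sub_nonneg_of_integral_inner_sub_nonneg
    (hxK : ∀ᵐ ω ∂μ, xStar ω ∈ K)
    (hVI : ∀ z : Lp H 2 μ, (∀ᵐ ω ∂μ, z ω ∈ K) → 0 ≤ ∫ ω, ⟪F ω, z ω - xStar ω⟫_ℝ ∂μ)
    {a : H} (ha : a ∈ K) :
    ∀ᵐ ω ∂μ, 0 ≤ ⟪F ω, a - xStar ω⟫_ℝ :=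
  ae_nonneg_of_forall_setIntegral_nonneg (integrable_inner_const_sub F xStar a) fun _ hA _ =>
    setIntegral_inner_sub_nonneg_of_integral_inner_sub_nonneg hxK hVI ha hA

end VariationalInequality

theorem integrated_VI_implies_pointwise_VI_general
    {Ω : Type*} [MeasurableSpace Ω] (μ : Measure Ω) [IsProbabilityMeasure μ]
    {H : Type*} [NormedAddCommGroup H] [InnerProductSpace ℝ H]
    [SecondCountableTopology H]
    (K : Set H)
    (xStar F : Lp H 2 μ)
    (hxK : ∀ᵐ ω ∂μ, xStar ω ∈ K)
    (hVI : ∀ z : Lp H 2 μ, (∀ᵐ ω ∂μ, z ω ∈ K) →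
      0 ≤ ∫ ω, ⟪F ω, z ω - xStar ω⟫_ℝ ∂μ) :
    ∀ᵐ ω ∂μ, ∀ a ∈ K, 0 ≤ ⟪F ω, a - xStar ω⟫_ℝ :=
  ae_forall_mem_of_isSeparable (IsSeparable.of_separableSpace K)
    (fun _ => isClosed_le continuous_const (by fun_prop))
    fun _ ha => ae_inner_sub_nonneg_of_integral_inner_sub_nonneg hxK hVI ha

theorem integrated_VI_implies_pointwise_VI
    {Ω : Type*} [MeasurableSpace Ω] (μ : Measure Ω) [IsProbabilityMeasure μ]
    {H : Type*} [NormedAddCommGroup H] [InnerProductSpace ℝ H] [CompleteSpace H]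
    [SecondCountableTopology H]
    (K : Set H) (hKne : K.Nonempty) (hKcl : IsClosed K) (hKconv : Convex ℝ K)
    (xStar F : Lp H 2 μ)
    (hxK : ∀ᵐ ω ∂μ, xStar ω ∈ K)
    (hVI : ∀ z : Lp H 2 μ, (∀ᵐ ω ∂μ, z ω ∈ K) →
      0 ≤ ∫ ω, ⟪F ω, z ω - xStar ω⟫_ℝ ∂μ) :
    ∀ᵐ ω ∂μ, ∀ a ∈ K, 0 ≤ ⟪F ω, a - xStar ω⟫_ℝ :=
  integrated_VI_implies_pointwise_VI_general μ K xStar F hxK hVI
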